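/- arXiv:2512.13341 — 2 statements merged into one kernel-verified Lean document; each statement's English description precedes it below -/
import Mathlib

section
/- Let (X,σ) be a binary subshift. If (X,σ) is non-tame, then X admits an uncountable choice domain. -/
open Filter Topology

noncomputable section

abbrev BinSeq : Type := ℕ → Bool

/-- The left shift on `{0,1}^ℕ`. -/
def binShift (x : BinSeq) : BinSeq := fun n => x (n + 1)

/-- A binary subshift: a nonempty closed shift-invariant subset of `{0,1}^ℕ`. -/
structure BinarySubshift where
  carrier : Set BinSeq
  nonempty : carrier.Nonempty
  isClosed : IsClosed carrier
  shift_mem : ∀ x ∈ carrier, binShift x ∈ carrier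

namespace BinarySubshift

variable (X : BinarySubshift)

/-- The shift map restricted to the subshift. -/
def S : X.carrier → X.carrier := fun x => ⟨binShift x, X.shift_mem x x.2⟩

/-- The (forward) Ellis semigroup `E(X)`: the closure of `{σⁿ : n ≥ 1}` in `X^X`. -/
def Ellis : Set (X.carrier → X.carrier) := closure (Set.range fun n : ℕ => X.S^[n + 1])

/-- `(X,σ)` is non-tame if `|E(X)| > 2^ℵ₀`. -/
def NonTame : Prop := Cardinal.continuum < Cardinal.mk ↥X.Ellis

end BinarySubshift

/-- `𝒯` is a choice domain: for all `m, n`, any `n` distinct points of `𝒯` and any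
choice functions `φ¹,…,φⁿ ∈ {0,1}^m` there are times `m < τ₁ < … < τ_m` realising
the prescribed values. -/
def IsChoiceDomain (𝒯 : Set BinSeq) : Prop :=
  ∀ (m n : ℕ) (x : Fin n → BinSeq), (∀ i, x i ∈ 𝒯) → Function.Injective x →
    ∀ φ : Fin n → Fin m → Bool, ∃ τ : Fin m → ℕ,
      StrictMono τ ∧ (∀ k, m < τ k) ∧ ∀ i k, x i (τ k) = φ i k

/-- `J` is an independence set for the pair `(A0, A1)` in `C`. -/
def IsIndependenceSet (C A0 A1 : Set BinSeq) (J : Set ℕ) : Prop :=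
  ∀ I : Finset ℕ, ↑I ⊆ J → ∀ φ : ℕ → Bool, ∃ x ∈ C, ∀ i ∈ I,
    binShift^[i] x ∈ (if φ i = true then A1 else A0)

/-!
Every element of the Ellis semigroup is a limit of `σⁿ⁺¹` along an ultrafilter `U` on `ℕ`, and is
determined by the set of points of `X` whose `U`-limit is `1`. Non-tameness therefore produces
more than `2^ℵ₀` such sets, so one of them is not Borel, and a non-Borel set is, together with its
complement, dense in some nonempty closed `F`. Splitting along `U` then lets every finite set of
coordinates shattered by `F` grow by one, so `X` shatters an infinite set of coordinates. Realizing
there an uncountable independent family of subsets of `ℕ` gives the choice domain.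
-/
open Cardinal Function Set

lemma binShift_iterate_apply (k : ℕ) (y : BinSeq) (n : ℕ) : binShift^[k] y n = y (n + k) := by
  induction k generalizing y with
  | zero => rfl
  | succ k ih => rw [iterate_succ_apply, ih]; rfl

def uLimTrue (U : Ultrafilter ℕ) : Set BinSeq := {x | ∀ᶠ n in (U : Filter ℕ), x n = true}

namespace BinarySubshift

variable (X : BinarySubshift)

lemma val_S_iterate (k : ℕ) (x : X.carrier) : (X.S^[k] x).1 = binShift^[k] x.1 :=
  Semiconj.iterate_right (f := Subtype.val) (fun _ => rfl) k x

lemma binShift_iterate_mem (k : ℕ) (x : X.carrier) : binShift^[k] x.1 ∈ X.carrier :=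
  X.val_S_iterate k x ▸ (X.S^[k] x).2

variable {X}

lemma exists_ultrafilter_of_mem_ellis {p : X.carrier → X.carrier} (hp : p ∈ X.Ellis) :
    ∃ U : Ultrafilter ℕ, ∀ x ℓ, (p x).1 ℓ = true ↔ binShift^[ℓ + 1] x.1 ∈ uLimTrue U := by
  have hp' : MapClusterPt p ⊤ fun n : ℕ => X.S^[n + 1] := by
    rw [mapClusterPt_def, map_top]
    exact mem_closure_iff_clusterPt.1 hp
  obtain ⟨U, -, hU⟩ := mapClusterPt_iff_ultrafilter.1 hp'
  refine ⟨U, fun x ℓ => ?_⟩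
  have hcoord : ∀ᶠ n in (U : Filter ℕ), x.1 (n + (ℓ + 1)) = (p x).1 ℓ := by
    have := ((continuous_apply ℓ).comp continuous_subtype_val |>.tendsto (p x)).comp
      (tendsto_pi_nhds.1 hU x)
    rw [nhds_discrete, tendsto_pure] at this
    filter_upwards [this] with n hn
    simp only [comp_apply, val_S_iterate, binShift_iterate_apply] at hn
    convert hn using 2
    omega
  simp only [uLimTrue, mem_ofPred_eq, binShift_iterate_apply]
  constructor
  · intro h
    filter_upwards [hcoord] with n hn using hn.trans h
  · intro h
    obtain ⟨n, h₁, h₂⟩ := (h.and hcoord).exists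
    exact h₂ ▸ h₁

lemma NonTame.continuum_lt_mk_range (h : X.NonTame) :
    𝔠 < #(range fun U : Ultrafilter ℕ => X.carrier ∩ uLimTrue U) := by
  choose U hU using fun p : X.Ellis => exists_ultrafilter_of_mem_ellis p.2
  refine h.trans_le <| mk_le_of_injective
    (f := fun p => ⟨X.carrier ∩ uLimTrue (U p), U p, rfl⟩) fun p q hpq => ?_
  have hpq : X.carrier ∩ uLimTrue (U p) = X.carrier ∩ uLimTrue (U q) := congrArg Subtype.val hpq
  refine Subtype.ext <| funext fun x => Subtype.ext <| funext fun ℓ => ?_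
  rw [Bool.eq_iff_iff, hU, hU]
  simpa only [mem_inter_iff, X.binShift_iterate_mem, true_and] using
    Set.ext_iff.1 hpq (binShift^[ℓ + 1] x.1)

end BinarySubshift

lemma MeasurableSpace.cardinal_measurableSet_le_continuum_of_countablyGenerated {α : Type*}
    [MeasurableSpace α] [MeasurableSpace.CountablyGenerated α] :
    #{s : Set α | MeasurableSet s} ≤ 𝔠 := by
  obtain ⟨b, hb, rfl⟩ := MeasurableSpace.CountablyGenerated.isCountablyGenerated (α := α)
  exact cardinal_measurableSet_le_continuum (hb.le_aleph0.trans aleph0_le_continuum)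

lemma BinarySubshift.NonTame.exists_not_measurableSet {X : BinarySubshift} (h : X.NonTame) :
    ∃ U : Ultrafilter ℕ, ¬MeasurableSet (X.carrier ∩ uLimTrue U) := by
  by_contra! hmeas
  refine h.continuum_lt_mk_range.not_ge <| (mk_le_mk_of_subset ?_).trans
    MeasurableSpace.cardinal_measurableSet_le_continuum_of_countablyGenerated
  rintro _ ⟨U, rfl⟩
  exact hmeas U

theorem exists_isClosed_subset_closure_inter_diff_of_not_measurableSet {α : Type*}
    [TopologicalSpace α] [SecondCountableTopology α] [MeasurableSpace α] [OpensMeasurableSpace α]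
    {s : Set α} (hs : ¬MeasurableSet s) :
    ∃ F, IsClosed F ∧ F.Nonempty ∧ F ⊆ closure (F ∩ s) ∧ F ⊆ closure (F \ s) := by
  obtain ⟨𝒪, h𝒪c, h𝒪, hG⟩ := TopologicalSpace.isOpen_sUnion_countable
    {O : Set α | IsOpen O ∧ MeasurableSet (O ∩ s)} fun O hO => hO.1
  -- `G` is the largest open set on which `s` is Borel; by Lindelöf `G ∩ s` is a countable union.
  set G := ⋃₀ {O : Set α | IsOpen O ∧ MeasurableSet (O ∩ s)}
  have hGopen : IsOpen G := isOpen_sUnion fun O hO => hO.1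
  have hGs : MeasurableSet (G ∩ s) := by
    rw [← hG, sUnion_eq_biUnion, iUnion₂_inter]
    exact .biUnion h𝒪c fun O hO => (h𝒪 hO).2
  have hG_of_split : ∀ O, IsOpen O → (O \ G ⊆ s ∨ O \ G ∩ s = ∅) → O ⊆ G := by
    intro O hO hsplit
    refine subset_sUnion_of_mem ⟨hO, ?_⟩
    have hOs : O ∩ s = O ∩ (G ∩ s) ∪ O \ G ∩ s := by
      ext y
      by_cases hy : y ∈ G <;> simp [hy]
    rw [hOs]
    refine (hO.measurableSet.inter hGs).union ?_
    rcases hsplit with h | h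
    · rw [inter_eq_left.2 h]
      exact hO.measurableSet.diff hGopen.measurableSet
    · rw [h]
      exact .empty
  refine ⟨Gᶜ, hGopen.isClosed_compl, ?_, fun x hx => ?_, fun x hx => ?_⟩
  · by_contra hempty
    rw [not_nonempty_iff_eq_empty, compl_empty_iff] at hempty
    exact hs (by simpa [hempty] using hGs)
  · refine mem_closure_iff.2 fun O hO hxO => nonempty_iff_ne_empty.2 fun h => hx ?_
    exact hG_of_split O hO (.inr (by rw [← h, sdiff_eq, inter_assoc])) hxO
  · refine mem_closure_iff.2 fun O hO hxO => nonempty_iff_ne_empty.2 fun h => hx ?_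
    refine hG_of_split O hO (.inl fun y hy => ?_) hxO
    by_contra hys
    exact eq_empty_iff_forall_notMem.1 h y ⟨hy.1, hy.2, hys⟩

def Shatters (F : Set BinSeq) (T : Set ℕ) : Prop :=
  ∀ t : ℕ → Bool, ∃ x ∈ F, ∀ j ∈ T, x j = t j

lemma Shatters.mono {F G : Set BinSeq} {T T' : Set ℕ} (h : Shatters F T) (hFG : F ⊆ G)
    (hT : T' ⊆ T) : Shatters G T' := fun t =>
  let ⟨x, hxF, hx⟩ := h t
  ⟨x, hFG hxF, fun j hj => hx j (hT hj)⟩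

lemma isOpen_setOf_forall_mem_finset_eq (T : Finset ℕ) (t : ℕ → Bool) :
    IsOpen {x : BinSeq | ∀ j ∈ T, x j = t j} := by
  simp only [ofPred_forall]
  exact isOpen_biInter_finset fun j _ => (isOpen_discrete {t j}).preimage
    (continuous_apply (A := fun _ : ℕ => Bool) j)

/-- For each pattern on `T` pick points of `F` with that pattern inside and outside `uLimTrue U`;
`U`-almost every coordinate reads `1` on all the former and `0` on all the latter, and such a
coordinate is new because each pair of points agrees on `T`. -/
lemma Shatters.exists_insert {F : Set BinSeq} {U : Ultrafilter ℕ}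
    (h₁ : F ⊆ closure (F ∩ uLimTrue U)) (h₀ : F ⊆ closure (F \ uLimTrue U))
    {T : Finset ℕ} (hT : Shatters F T) : ∃ m ∉ T, Shatters F ↑(insert m T) := by
  classical
  have hmeet : ∀ (P : Finset ℕ) (G : Set BinSeq), F ⊆ closure G →
      ∃ x ∈ G, ∀ j ∈ T, x j = decide (j ∈ P) := by
    intro P G hG
    obtain ⟨x, hxF, hx⟩ := hT fun j => decide (j ∈ P)
    obtain ⟨y, hyT, hyG⟩ := mem_closure_iff.1 (hG hxF) _ (isOpen_setOf_forall_mem_finset_eq T _) hx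
    exact ⟨y, hyG, hyT⟩
  choose a ha haT using fun P => hmeet P _ h₁
  choose b hb hbT using fun P => hmeet P _ h₀
  obtain ⟨m, hm⟩ : ∃ m, ∀ P ∈ T.powerset, a P m = true ∧ b P m = false := by
    refine (eventually_all_finset _ |>.2 fun P _ => (ha P).2.and ?_).exists
    simpa using Ultrafilter.eventually_not.2 (hb P).2
  refine ⟨m, fun hmT => ?_, fun t => ?_⟩
  · have := (haT ∅ m hmT).trans (hbT ∅ m hmT).symm
    rw [(hm ∅ T.empty_mem_powerset).1, (hm ∅ T.empty_mem_powerset).2] at this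
    exact Bool.true_eq_false.mp this
  · set P := T.filter fun j => t j = true
    have hP : P ∈ T.powerset := Finset.mem_powerset.2 (Finset.filter_subset _ _)
    have hagree : ∀ x : BinSeq, (∀ j ∈ T, x j = decide (j ∈ P)) → ∀ j ∈ T, x j = t j := by
      intro x hx j hj
      simp [hx j hj, P, hj]
    simp only [Finset.coe_insert, mem_insert_iff, forall_eq_or_imp]
    cases htm : t m
    · exact ⟨b P, (hb P).1, (hm P hP).2, hagree _ (hbT P)⟩
    · exact ⟨a P, (ha P).1, (hm P hP).1, hagree _ (haT P)⟩

lemma exists_infinite_forall_finset_shatters {F : Set BinSeq} (hF : F.Nonempty)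
    {U : Ultrafilter ℕ} (h₁ : F ⊆ closure (F ∩ uLimTrue U)) (h₀ : F ⊆ closure (F \ uLimTrue U)) :
    ∃ S : Set ℕ, S.Infinite ∧ ∀ T : Finset ℕ, ↑T ⊆ S → Shatters F T := by
  choose next hnext hsh using fun T : {T : Finset ℕ // Shatters F T} => T.2.exists_insert h₁ h₀
  let T : ℕ → {T : Finset ℕ // Shatters F T} := fun k =>
    Nat.rec ⟨∅, fun _ => hF.imp fun _ hx => ⟨hx, by simp⟩⟩ (fun _ T => ⟨_, hsh T⟩) k
  have hmono : Monotone fun k => ((T k).1 : Set ℕ) :=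
    monotone_nat_of_le_succ fun k => Finset.coe_subset.2 (Finset.subset_insert _ _)
  have hnext_mem : ∀ i k, i < k → next (T i) ∈ (T k).1 := fun i k hik =>
    hmono hik (Finset.mem_insert_self _ _)
  refine ⟨⋃ k, (T k).1, ?_, fun T' hT' => ?_⟩
  · refine (infinite_range_of_injective (f := fun k => next (T k)) ?_).mono ?_
    · exact Injective.of_lt_imp_ne fun i k hik h => hnext (T k) (h ▸ hnext_mem i k hik)
    · rintro _ ⟨k, rfl⟩
      exact mem_iUnion.2 ⟨k + 1, hnext_mem k (k + 1) k.lt_succ_self⟩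
  · obtain ⟨k, hk⟩ := hmono.directed_le.exists_mem_subset_of_finset_subset_biUnion hT'
    exact (T k).2.mono subset_rfl hk

lemma shatters_of_forall_finset {K : Set BinSeq} (hK : IsClosed K) {S : Set ℕ}
    (h : ∀ T : Finset ℕ, ↑T ⊆ S → Shatters K T) : Shatters K S := by
  intro t
  obtain ⟨x, hxK, hx⟩ := hK.isCompact.inter_iInter_nonempty (fun j : S => {x : BinSeq | x j = t j})
    (fun j => isClosed_eq (continuous_apply _) continuous_const) fun u => by
      obtain ⟨x, hxK, hx⟩ := h (u.map (Embedding.subtype _)) (by simp) t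
      exact ⟨x, hxK, by simpa using fun j hj hju => hx j (by simpa [hj] using hju)⟩
  exact ⟨x, hxK, fun j hj => by simpa using mem_iInter.1 hx ⟨j, hj⟩⟩

def IsIndependentFamily {ι : Type*} (f : ι → BinSeq) : Prop :=
  ∀ (n : ℕ) (a : Fin n → ι), Injective a → ∀ ψ : Fin n → Bool, {ℓ | ∀ i, f (a i) ℓ = ψ i}.Infinite

lemma exists_strictMono_forall_mem {m : ℕ} (W : Fin m → Set ℕ) (hW : ∀ k, (W k).Infinite)
    (b : ℕ) : ∃ τ : Fin m → ℕ, StrictMono τ ∧ (∀ k, b < τ k) ∧ ∀ k, τ k ∈ W k := by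
  induction m generalizing b with
  | zero => exact ⟨finZeroElim, fun i => i.elim0, fun i => i.elim0, fun i => i.elim0⟩
  | succ m ih =>
    obtain ⟨τ₀, hτ₀W, hτ₀b⟩ := (hW 0).exists_gt b
    obtain ⟨τ, hτ, hτgt, hτW⟩ := ih (fun k => W k.succ) (fun k => hW _) τ₀
    exact ⟨Fin.cons τ₀ τ, Fin.strictMono_cons.2 ⟨hτgt, hτ⟩,
      Fin.cases hτ₀b fun k => hτ₀b.trans (hτgt k), Fin.cases hτ₀W hτW⟩

lemma IsIndependentFamily.isChoiceDomain {ι : Type*} {f : ι → BinSeq}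
    (hf : IsIndependentFamily f) : IsChoiceDomain (range f) := by
  intro m n x hx hxinj φ
  choose a ha using hx
  have hainj : Injective a := fun i j hij => hxinj (by rw [← ha i, ← ha j, hij])
  obtain ⟨τ, hτ, hτm, hτW⟩ := exists_strictMono_forall_mem (fun k => {ℓ | ∀ i, x i ℓ = φ i k})
    (fun k => by simpa only [ha] using hf n a hainj fun i => φ i k) m
  exact ⟨τ, hτ, hτm, fun i k => hτW k i⟩

/-- The Fichtenholz–Kantorovich–Hausdorff independent family on the countable set of pairs
`(s, 𝓕)`. -/
def hausdorffFamily (a : BinSeq) (ω : ℕ × Finset (Finset ℕ)) : Bool :=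
  decide ((Finset.range ω.1).filter (fun j => a j = true) ∈ ω.2)

lemma infinite_setOf_hausdorffFamily_eq {n : ℕ} {a : Fin n → BinSeq} (ha : Injective a)
    (ψ : Fin n → Bool) : {ω | ∀ i, hausdorffFamily (a i) ω = ψ i}.Infinite := by
  classical
  set tr : BinSeq → ℕ → Finset ℕ := fun b s => (Finset.range s).filter fun j => b j = true
  have hsep : ∀ᶠ s in atTop, Injective fun i => tr (a i) s := by
    refine eventually_all.2 fun i => eventually_all.2 fun j => ?_
    by_cases hij : i = j
    · exact .of_forall fun _ _ => hij
    obtain ⟨k, hk⟩ := ne_iff.1 (ha.ne hij)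
    filter_upwards [eventually_gt_atTop k] with s hs heq
    have := congrArg (k ∈ ·) heq
    simp only [tr, Finset.mem_filter, Finset.mem_range, hs, true_and, eq_iff_iff] at this
    exact absurd (Bool.eq_iff_iff.2 this) hk
  let w : ℕ → ℕ × Finset (Finset ℕ) := fun s =>
    (s, (Finset.univ.filter fun i => ψ i = true).image fun i => tr (a i) s)
  refine infinite_of_injOn_mapsTo (f := w) (fun s _ t _ hst => congrArg Prod.fst hst)
    (fun s hs i => ?_) (Nat.frequently_atTop_iff_infinite.1 hsep.frequently)
  simp only [hausdorffFamily, w, Finset.mem_image, Finset.mem_filter, Finset.mem_univ, true_and]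
  cases hψ : ψ i
  · simp only [decide_eq_false_iff_not, not_exists, not_and]
    intro j hj hji
    rw [hs hji, hψ] at hj
    exact Bool.false_ne_true hj
  · simpa using ⟨i, hψ, rfl⟩

lemma exists_injective_isIndependentFamily :
    ∃ f : BinSeq → BinSeq, Injective f ∧ IsIndependentFamily f := by
  obtain ⟨e, he⟩ := exists_surjective_nat (ℕ × Finset (Finset ℕ))
  refine ⟨fun a => hausdorffFamily a ∘ e, fun a b hab => funext fun k => ?_,
    fun n a ha ψ =>
      (infinite_setOf_hausdorffFamily_eq ha ψ).preimage (he.range_eq ▸ subset_univ _)⟩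
  obtain ⟨ℓ, hℓ⟩ := he (k + 1, {(Finset.range (k + 1)).filter fun j => a j = true})
  have := congrFun hab ℓ
  simp only [comp_apply, hℓ, hausdorffFamily, Finset.mem_singleton, decide_true] at this
  have := congrArg (k ∈ ·) (of_decide_eq_true this.symm)
  simp only [Finset.mem_filter, Finset.mem_range, k.lt_succ_self, true_and, eq_iff_iff] at this
  exact Bool.eq_iff_iff.2 this.symm

lemma not_countable_univ_binSeq : ¬(univ : Set BinSeq).Countable := by
  rw [countable_univ_iff, ← mk_le_aleph0_iff, mk_arrow]
  simpa using aleph0_lt_continuum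

lemma Shatters.exists_isIndependentFamily_of_infinite {K : Set BinSeq} {S : Set ℕ}
    (hK : Shatters K S) (hS : S.Infinite) :
    ∃ g : BinSeq → BinSeq, Injective g ∧ (∀ a, g a ∈ K) ∧ IsIndependentFamily g := by
  obtain ⟨f, hf, hind⟩ := exists_injective_isIndependentFamily
  set J : ℕ → ℕ := fun k => hS.natEmbedding S k
  have hJ : Injective J := Subtype.val_injective.comp (hS.natEmbedding S).injective
  choose g hgK hg using fun a => hK fun j => f a (invFun J j)
  have hgJ : ∀ a k, g a (J k) = f a k := fun a k => by
    rw [hg a _ (hS.natEmbedding S k).2, leftInverse_invFun hJ k]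
  refine ⟨g, fun a b hab => hf (funext fun k => by rw [← hgJ, ← hgJ, hab]), hgK,
    fun n a ha ψ => ((hind n a ha ψ).image hJ.injOn).mono ?_⟩
  rintro _ ⟨ℓ, hℓ, rfl⟩ i
  rw [hgJ]
  exact hℓ i

/-- A non-tame binary subshift admits an uncountable choice
domain. -/
theorem subshift_nontame_implies_uncountable_choice_domain (X : BinarySubshift)
    (h : X.NonTame) :
    ∃ 𝒯 ⊆ X.carrier, ¬𝒯.Countable ∧ IsChoiceDomain 𝒯 := by
  obtain ⟨U, hU⟩ := h.exists_not_measurableSet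
  obtain ⟨F, -, hFne, hF₁, hF₀⟩ :=
    exists_isClosed_subset_closure_inter_diff_of_not_measurableSet hU
  have hFX : F ⊆ X.carrier :=
    hF₁.trans (closure_minimal (inter_subset_right.trans inter_subset_left) X.isClosed)
  obtain ⟨S, hS, hFS⟩ := exists_infinite_forall_finset_shatters hFne
    (hF₁.trans (closure_mono (inter_subset_inter_right F inter_subset_right)))
    (hF₀.trans (closure_mono fun x hx => ⟨hx.1, fun hxL => hx.2 ⟨hFX hx.1, hxL⟩⟩))
  obtain ⟨g, hg, hgX, hind⟩ := (shatters_of_forall_finset X.isClosed fun T hT =>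
    (hFS T hT).mono hFX subset_rfl).exists_isIndependentFamily_of_infinite hS
  exact ⟨range g, range_subset_iff.2 hgX,
    fun hcount => not_countable_univ_binSeq (by simpa using hcount.preimage hg),
    hind.isChoiceDomain⟩
end
end

section
/- Let (X,σ) be a binary subshift that admits an uncountable choice domain 𝒯. Then for every function f : 𝒯 → {0,1} there exists η ∈ E(X) such that (η(x))₁ = f(x) for every x ∈ 𝒯; consequently, the cardinality of E(X) is strictly greater than 2^ℵ₀, i.e. (X,σ) is non-tame. -/
open Filter Topology

noncomputable section

/-!
On finitely many points of `𝒯` a single shift realises any prescribed first coordinates, so by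
compactness of `X^X` some limit of shifts realises `f` on all of `𝒯` at once.

For the cardinality, uncountability of `𝒯` yields positive times `j 0, j 1, …` such that every
finite pattern along them is carried by uncountably many points of `𝒯`: at each stage, discard
the points lying in some countable slice `{x | x τ = b}`, pick two fresh points per pattern, and
let the choice-domain property split all patterns at one new time. By compactness `X` then
realises every `a ∈ {0,1}^ℕ` along `j`; composing with an independent family of size `𝔠` on `ℕ`
gives `2^𝔠` distinct elements of `E(X)`.
-/

theorem exists_injective_forall_mem_of_infinite {ι α : Type*} [Finite ι] (S : ι → Set α)
    (hS : ∀ i, (S i).Infinite) : ∃ g : ι → α, Function.Injective g ∧ ∀ i, g i ∈ S i := by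
  classical
  cases nonempty_fintype ι
  choose t ht_sub ht_card using fun i => (hS i).exists_subset_card_eq (Fintype.card ι)
  obtain ⟨g, hg_inj, hg⟩ := (Finset.all_card_le_biUnion_card_iff_exists_injective t).1 fun s => by
    rcases s.eq_empty_or_nonempty with rfl | ⟨i, hi⟩
    · simp
    · calc s.card ≤ Fintype.card ι := Finset.card_le_univ s
        _ = (t i).card := (ht_card i).symm
        _ ≤ (s.biUnion t).card := Finset.card_le_card (Finset.subset_biUnion_of_mem t hi)
  exact ⟨g, hg_inj, fun i => ht_sub i (hg i)⟩

theorem exists_seq_of_forall_exists_snoc {α : Type*} (P : ∀ m, (Fin m → α) → Prop)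
    (h0 : P 0 Fin.elim0) (h : ∀ m s, P m s → ∃ a, P (m + 1) (Fin.snoc s a)) :
    ∃ f : ℕ → α, ∀ m, P m fun k => f k := by
  choose c hc using h
  let T : ∀ m, {s // P m s} := fun m =>
    Nat.rec ⟨Fin.elim0, h0⟩ (fun m s => ⟨Fin.snoc s.1 (c m s.1 s.2), hc m s.1 s.2⟩) m
  refine ⟨fun n => (T (n + 1)).1 (Fin.last n), fun m => ?_⟩
  suffices (T m).1 = fun k : Fin m => (T (k + 1)).1 (Fin.last k) from this ▸ (T m).2
  induction m with
  | zero => exact funext fun k => k.elim0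
  | succ m ih =>
    funext k
    cases k using Fin.lastCases with
    | last => rfl
    | cast k => exact (Fin.snoc_castSucc (α := fun _ => α) ..).trans (congrFun ih k)

theorem exists_injOn_map_range {β : Type*} (G : Finset (ℕ → β)) :
    ∃ N, Set.InjOn (fun z => (List.range N).map z) (G : Set (ℕ → β)) := by
  suffices ∀ᶠ N in atTop, ∀ z ∈ G, ∀ z' ∈ G, (List.range N).map z = (List.range N).map z' → z = z'
    from this.exists.imp fun N hN z hz z' hz' => hN z hz z' hz'
  simp only [eventually_all_finset]
  intro z _ z' _
  by_cases hzz' : z = z'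
  · exact Eventually.of_forall fun _ _ => hzz'
  obtain ⟨i, hi⟩ := Function.ne_iff.1 hzz'
  filter_upwards [eventually_gt_atTop i] with N hN hmap
  have := congrArg (·[i]?) hmap
  simp only [List.getElem?_map, List.getElem?_range hN, Option.map_some, Option.some.injEq] at this
  exact absurd this hi

theorem exists_independent_family :
    ∃ a : (ℕ → Bool) → ℕ → Bool,
      ∀ (G : Finset (ℕ → Bool)) (f : (ℕ → Bool) → Bool), ∃ n, ∀ z ∈ G, a z n = f z := by
  classical
  obtain ⟨e, he⟩ := exists_surjective_nat (ℕ × Finset (List Bool))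
  refine ⟨fun z n => decide ((List.range (e n).1).map z ∈ (e n).2), fun G f => ?_⟩
  obtain ⟨N, hN⟩ := exists_injOn_map_range G
  obtain ⟨n, hn⟩ := he (N, (G.filter fun z => f z = true).image fun z => (List.range N).map z)
  refine ⟨n, fun z hz => ?_⟩
  have hmem : (List.range N).map z ∈
      (G.filter fun z => f z = true).image (fun z => (List.range N).map z) ↔ f z = true := by
    refine ⟨fun h => ?_, fun h => Finset.mem_image_of_mem _ (Finset.mem_filter.2 ⟨hz, h⟩)⟩
    obtain ⟨z', hz', hz'z⟩ := Finset.mem_image.1 h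
    exact hN (Finset.mem_filter.1 hz').1 hz hz'z ▸ (Finset.mem_filter.1 hz').2
  simpa only [hn] using Bool.eq_iff_iff.2 (decide_eq_true_iff.trans hmem)

namespace BinarySubshift

variable (X : BinarySubshift)

instance : CompactSpace X.carrier := isCompact_iff_compactSpace.1 X.isClosed.isCompact

theorem coe_S_iterate_apply (t : ℕ) (x : X.carrier) (n : ℕ) :
    (X.S^[t] x : BinSeq) n = (x : BinSeq) (n + t) := by
  induction t generalizing x with
  | zero => rfl
  | succ t ih => exact ih (X.S x)

theorem exists_mem_ellis_apply_zero_eq {ι : Type*} (p : ι → X.carrier) (f : ι → Bool)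
    (h : ∀ F : Finset ι, ∃ t, 0 < t ∧ ∀ i ∈ F, (p i : BinSeq) t = f i) :
    ∃ η ∈ X.Ellis, ∀ i, (η (p i) : BinSeq) 0 = f i := by
  have hclosed : ∀ i, IsClosed {η : X.carrier → X.carrier | (η (p i) : BinSeq) 0 = f i} :=
    fun i => isClosed_eq
      ((continuous_apply 0).comp (continuous_subtype_val.comp (continuous_apply (p i))))
      continuous_const
  have hcpt : IsCompact X.Ellis := isClosed_closure.isCompact
  obtain ⟨η, hη, hηp⟩ := hcpt.inter_iInter_nonempty _ hclosed fun F => by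
    obtain ⟨t, ht, htF⟩ := h F
    refine ⟨X.S^[t], subset_closure ⟨t - 1, by simp only [Nat.sub_add_cancel ht]⟩, ?_⟩
    simpa [coe_S_iterate_apply] using htF
  exact ⟨η, hη, Set.mem_iInter.1 hηp⟩

theorem exists_mem_apply_eq (j : ℕ → ℕ) (a : ℕ → Bool)
    (h : ∀ m, ∃ x ∈ X.carrier, ∀ k : Fin m, x (j k) = a k) :
    ∃ x ∈ X.carrier, ∀ n, x (j n) = a n := by
  obtain ⟨x, hx, hxa⟩ := X.isClosed.isCompact.inter_iInter_nonempty (fun n => {x | x (j n) = a n})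
    (fun n => isClosed_eq (continuous_apply _) continuous_const) fun F => by
      obtain ⟨x, hx, hxa⟩ := h (F.sup id + 1)
      exact ⟨x, hx, Set.mem_iInter₂.2 fun n hn =>
        hxa ⟨n, Nat.lt_succ_of_le (Finset.le_sup (f := id) hn)⟩⟩
  exact ⟨x, hx, Set.mem_iInter.1 hxa⟩

theorem continuum_lt_mk_ellis (j : ℕ → ℕ) (hj : ∀ n, 0 < j n)
    (h : ∀ a : ℕ → Bool, ∃ x ∈ X.carrier, ∀ n, x (j n) = a n) :
    Cardinal.continuum < Cardinal.mk X.Ellis := by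
  obtain ⟨a, ha⟩ := exists_independent_family
  choose x hxX hx using fun z => h (a z)
  choose η hη hηx using fun f => X.exists_mem_ellis_apply_zero_eq (fun z => ⟨x z, hxX z⟩) f
    fun G =>
      let ⟨n, hn⟩ := ha G f; ⟨j n, hj n, fun z hz => (hx z n).trans (hn z hz)⟩
  have hinj : Function.Injective fun f => (⟨η f, hη f⟩ : X.Ellis) := fun f g hfg =>
    funext fun z => by rw [← hηx f z, ← hηx g z, Subtype.mk.inj hfg]
  calc Cardinal.continuum < 2 ^ Cardinal.continuum := Cardinal.cantor _
    _ = Cardinal.mk ((ℕ → Bool) → Bool) := by simp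
    _ ≤ Cardinal.mk X.Ellis := Cardinal.mk_le_of_injective hinj

end BinarySubshift

namespace IsChoiceDomain

variable {𝒯 : Set BinSeq}

theorem exists_time_apply_eq {ι : Type*} [Finite ι] (hcd : IsChoiceDomain 𝒯) (x : ι → BinSeq)
    (hx : ∀ i, x i ∈ 𝒯) (hinj : Function.Injective x) (φ : ι → Bool) :
    ∃ τ, 1 < τ ∧ ∀ i, x i τ = φ i := by
  cases nonempty_fintype ι
  let e := Fintype.equivFin ι
  obtain ⟨τ, -, hτ, hxτ⟩ := hcd 1 _ (x ∘ e.symm) (fun _ => hx _) (hinj.comp e.symm.injective)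
    fun i _ => φ (e.symm i)
  exact ⟨τ 0, hτ 0, fun i => by simpa using hxτ (e i) 0⟩

theorem exists_time_split {ι : Type*} [Finite ι] (hcd : IsChoiceDomain 𝒯)
    (𝒮 : ι → Set BinSeq) (h𝒮 : ∀ i, 𝒮 i ⊆ 𝒯) (hunc : ∀ i, ¬(𝒮 i).Countable) :
    ∃ τ, 1 < τ ∧ ∀ i b, ¬{x ∈ 𝒮 i | x τ = b}.Countable := by
  -- a point outside `N i` lies in no countable slice of `𝒮 i`
  let N i := ⋃ (p : ℕ × Bool) (_ : {x ∈ 𝒮 i | x p.1 = p.2}.Countable), {x ∈ 𝒮 i | x p.1 = p.2}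
  have hN : ∀ i, (N i).Countable := fun i =>
    Set.countable_iUnion fun _ => Set.countable_iUnion fun h => h
  have hinf : ∀ i, (𝒮 i \ N i).Infinite := fun i hfin =>
    hunc i ((hfin.countable.union (hN i)).mono (Set.subset_sdiff_union _ _))
  obtain ⟨g, hg_inj, hg⟩ :=
    exists_injective_forall_mem_of_infinite (fun p : ι × Bool => 𝒮 p.1 \ N p.1) fun p => hinf p.1
  obtain ⟨τ, hτ, hgτ⟩ := hcd.exists_time_apply_eq g (fun p => h𝒮 _ (hg p).1) hg_inj Prod.snd
  exact ⟨τ, hτ, fun i b hcount =>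
    (hg (i, b)).2 (Set.mem_iUnion₂.2 ⟨(τ, b), hcount, (hg (i, b)).1, hgτ (i, b)⟩)⟩

theorem exists_independent_times (hcd : IsChoiceDomain 𝒯) (hunc : ¬𝒯.Countable) :
    ∃ j : ℕ → ℕ, (∀ n, 0 < j n) ∧
      ∀ m (a : Fin m → Bool), ∃ x ∈ 𝒯, ∀ k : Fin m, x (j k) = a k := by
  let P m (s : Fin m → ℕ) : Prop :=
    (∀ k, 0 < s k) ∧ ∀ a : Fin m → Bool, ¬{x ∈ 𝒯 | ∀ k, x (s k) = a k}.Countable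
  have h0 : P 0 Fin.elim0 := ⟨fun k => k.elim0, fun a => by simpa using hunc⟩
  have hstep : ∀ m s, P m s → ∃ τ, P (m + 1) (Fin.snoc s τ) := by
    rintro m s ⟨hpos, hs⟩
    obtain ⟨τ, hτ, hsplit⟩ := hcd.exists_time_split
      (fun a : Fin m → Bool => {x ∈ 𝒯 | ∀ k, x (s k) = a k}) (fun _ _ hx => hx.1) hs
    refine ⟨τ, Fin.lastCases (by rw [Fin.snoc_last]; omega) (by simpa using hpos), fun a => ?_⟩
    convert hsplit (Fin.init a) (a (Fin.last m)) using 2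
    ext x
    simp [Fin.forall_fin_succ', Fin.init, and_assoc]
  obtain ⟨j, hj⟩ := exists_seq_of_forall_exists_snoc P h0 hstep
  exact ⟨j, fun n => (hj (n + 1)).1 (Fin.last n), fun m a =>
    Set.nonempty_iff_ne_empty.2 fun h => (hj m).2 a (h ▸ Set.countable_empty)⟩

end IsChoiceDomain

/-- If a binary subshift admits an uncountable choice domain `𝒯`,
then every `f : 𝒯 → {0,1}` is realised at the first coordinate by some
`η ∈ E(X)`; consequently `|E(X)| > 2^ℵ₀`, i.e. `(X,σ)` is non-tame. -/
theorem subshift_choice_domain_implies_nontame (X : BinarySubshift)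
    (𝒯 : Set BinSeq) (hsub : 𝒯 ⊆ X.carrier) (hunc : ¬𝒯.Countable)
    (hcd : IsChoiceDomain 𝒯) :
    (∀ f : ↥𝒯 → Bool, ∃ η ∈ X.Ellis, ∀ x : ↥𝒯,
      (η ⟨(x : BinSeq), hsub x.2⟩ : BinSeq) 0 = f x) ∧
    Cardinal.continuum < Cardinal.mk ↥X.Ellis := by
  constructor
  · intro f
    refine X.exists_mem_ellis_apply_zero_eq (fun x : 𝒯 => ⟨x, hsub x.2⟩) f fun F => ?_
    obtain ⟨τ, hτ, hFτ⟩ := hcd.exists_time_apply_eq (fun x : F => ((x : 𝒯) : BinSeq))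
      (fun x => (x : 𝒯).2) (Subtype.val_injective.comp Subtype.val_injective) fun x => f x
    exact ⟨τ, by omega, fun x hx => hFτ ⟨x, hx⟩⟩
  · obtain ⟨j, hj_pos, hj⟩ := hcd.exists_independent_times hunc
    refine X.continuum_lt_mk_ellis j hj_pos fun a => X.exists_mem_apply_eq j a fun m => ?_
    obtain ⟨x, hx, hxa⟩ := hj m fun k => a k
    exact ⟨x, hsub hx, hxa⟩
end
end
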